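/- If ξ is a Liouville number and p_n/q_n are the convergents of its continued fraction expansion with q_n the denominators, then q_m > e^{(m-3)!} for all sufficiently large m, provided ξ is an ultra-strong Liouville number. -/

import Mathlib

/-- A real `ξ` is an ultra-strong Liouville number if the convergents of its continued
fraction satisfy `0 < |ξ - p_n/q_n| < 1/q_n^n` for all `n ≥ 1`. -/
def UltraStrongLiouville (ξ : ℝ) : Prop :=
  ∀ n : ℕ, 1 ≤ n →
    0 < |ξ - (GenContFract.of ξ).convs n| ∧
    |ξ - (GenContFract.of ξ).convs n| < 1 / ((GenContFract.of ξ).dens n) ^ n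

/-!
Consecutive convergents lie on opposite sides of `ξ` at distance `1 / (q_n q_{n+1})`, so the
ultra-strong bounds give `1 / (q_n q_{n+1}) < 1 / q_n^n + 1 / q_{n+1}^{n+1} ≤ 2 / q_n^n`, i.e.
`q_n^(n-1) < 2 q_{n+1}`. In logarithms, `(n - 1) log q_n < log q_{n+1} + 1`: the logarithms of the
denominators grow at least factorially. Starting from `q_5 ≥ F_6 = 8 > e²`, an induction gives
`log q_m ≥ (m-2)!/6 + 1`, which exceeds `(m-3)!` once `m ≥ 8`.
-/

open Real
open scoped Nat

section FactorialGrowth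

variable {a : ℕ → ℝ}

theorem factorial_sub_two_div_six_add_one_le (h5 : 2 ≤ a 5)
    (hstep : ∀ n : ℕ, 5 ≤ n → ((n : ℝ) - 1) * a n < a (n + 1) + 1) {m : ℕ} (hm : 5 ≤ m) :
    ((m - 2)! : ℝ) / 6 + 1 ≤ a m := by
  induction m, hm using Nat.le_induction with
  | base => norm_num [Nat.factorial]; linarith
  | succ m hm ih =>
    have hstep := hstep m hm
    have hm' : (5 : ℝ) ≤ m := by exact_mod_cast hm
    rw [show m + 1 - 2 = (m - 2) + 1 by omega, Nat.factorial_succ, Nat.cast_mul,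
      Nat.cast_add_one, Nat.cast_sub (by omega : 2 ≤ m)]
    nlinarith

theorem factorial_sub_three_lt (h5 : 2 ≤ a 5)
    (hstep : ∀ n : ℕ, 5 ≤ n → ((n : ℝ) - 1) * a n < a (n + 1) + 1) {m : ℕ} (hm : 8 ≤ m) :
    ((m - 3)! : ℝ) < a m := by
  have hbound := factorial_sub_two_div_six_add_one_le h5 hstep (by omega : 5 ≤ m)
  rw [show m - 2 = (m - 3) + 1 by omega, Nat.factorial_succ, Nat.cast_mul] at hbound
  have h6 : (6 : ℝ) ≤ ((m - 3 + 1 : ℕ) : ℝ) := by exact_mod_cast (by omega : 6 ≤ m - 3 + 1)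
  have hfact : (0 : ℝ) ≤ (m - 3)! := Nat.cast_nonneg _
  nlinarith

end FactorialGrowth

namespace GenContFract

section Denominators

variable {K : Type*} [Field K] [LinearOrder K] [IsStrictOrderedRing K] [FloorRing K]

theorem of_dens_monotone (v : K) : Monotone (GenContFract.of v).dens :=
  monotone_nat_of_le_succ fun _ => of_den_mono

theorem one_le_of_den (v : K) (n : ℕ) : 1 ≤ (GenContFract.of v).dens n :=
  zeroth_den_eq_one (g := GenContFract.of v) ▸ of_dens_monotone v (Nat.zero_le n)

theorem of_den_pos (v : K) (n : ℕ) : 0 < (GenContFract.of v).dens n :=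
  zero_lt_one.trans_le (one_le_of_den v n)

theorem abs_convs_sub_convs_succ {v : K} {n : ℕ} (hn : ¬(GenContFract.of v).TerminatedAt n) :
    |(GenContFract.of v).convs n - (GenContFract.of v).convs (n + 1)| =
      1 / ((GenContFract.of v).dens n * (GenContFract.of v).dens (n + 1)) := by
  have hq := of_den_pos v n
  have hq' := of_den_pos v (n + 1)
  have hdet : (GenContFract.of v).nums n * (GenContFract.of v).dens (n + 1) -
      (GenContFract.of v).dens n * (GenContFract.of v).nums (n + 1) = (-1) ^ (n + 1) :=
    SimpContFract.determinant (s := SimpContFract.of v) hn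
  rw [conv_eq_num_div_den, conv_eq_num_div_den, div_sub_div _ _ hq.ne' hq'.ne', hdet, abs_div,
    abs_pow, abs_neg, abs_one, one_pow, abs_of_pos (mul_pos hq hq')]

end Denominators

theorem two_le_log_of_den {ξ : ℝ} (h4 : ¬(GenContFract.of ξ).TerminatedAt 4) {n : ℕ}
    (hn : 5 ≤ n) :
    2 ≤ log ((GenContFract.of ξ).dens n) := by
  have h8 : (8 : ℝ) ≤ (GenContFract.of ξ).dens n := calc
    (8 : ℝ) = Nat.fib 6 := by norm_num
    _ ≤ (GenContFract.of ξ).dens 5 := succ_nth_fib_le_of_nth_den (Or.inr h4)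
    _ ≤ (GenContFract.of ξ).dens n := of_dens_monotone ξ hn
  have hexp : exp 2 < 8 := by
    rw [show (2 : ℝ) = 1 + 1 by norm_num, exp_add]
    nlinarith [exp_one_lt_d9, exp_pos 1]
  rw [le_log_iff_exp_le (of_den_pos ξ n)]
  linarith

end GenContFract

namespace UltraStrongLiouville

open GenContFract

variable {ξ : ℝ}

theorem not_terminatedAt (h : UltraStrongLiouville ξ) (n : ℕ) :
    ¬(GenContFract.of ξ).TerminatedAt n :=
  fun hn => (h (n + 1) n.succ_pos).1.ne' <| by
    rw [← of_correctness_of_terminatedAt (terminated_stable n.le_succ hn), sub_self, abs_zero]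

theorem dens_pow_pred_lt_two_mul_dens_succ (h : UltraStrongLiouville ξ) {n : ℕ} (hn : 1 ≤ n) :
    (GenContFract.of ξ).dens n ^ (n - 1) < 2 * (GenContFract.of ξ).dens (n + 1) := by
  set q := (GenContFract.of ξ).dens
  set c := (GenContFract.of ξ).convs
  have hq := of_den_pos ξ n
  have hq' := of_den_pos ξ (n + 1)
  have hpow : q n ^ n ≤ q (n + 1) ^ (n + 1) :=
    (pow_le_pow_left₀ hq.le of_den_mono n).trans
      (pow_le_pow_right₀ (one_le_of_den ξ _) n.le_succ)
  have gap : 1 / (q n * q (n + 1)) < 2 / q n ^ n := calc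
    1 / (q n * q (n + 1)) = |c n - c (n + 1)| :=
      (abs_convs_sub_convs_succ (h.not_terminatedAt n)).symm
    _ ≤ |ξ - c n| + |ξ - c (n + 1)| := (abs_sub_le _ ξ _).trans_eq (by rw [abs_sub_comm])
    _ < 1 / q n ^ n + 1 / q (n + 1) ^ (n + 1) := add_lt_add (h n hn).2 (h (n + 1) (by omega)).2
    _ ≤ 1 / q n ^ n + 1 / q n ^ n := by gcongr
    _ = 2 / q n ^ n := by ring
  rw [div_lt_div_iff₀ (by positivity) (by positivity), one_mul,
    ← pow_sub_one_mul (by omega : n ≠ 0), mul_comm (q n), ← mul_assoc] at gap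
  exact lt_of_mul_lt_mul_right gap hq.le

theorem sub_one_mul_log_dens_lt (h : UltraStrongLiouville ξ) {n : ℕ} (hn : 1 ≤ n) :
    ((n : ℝ) - 1) * log ((GenContFract.of ξ).dens n) <
      log ((GenContFract.of ξ).dens (n + 1)) + 1 := by
  have key := log_lt_log (pow_pos (of_den_pos ξ n) _) (h.dens_pow_pred_lt_two_mul_dens_succ hn)
  rw [log_pow, log_mul two_ne_zero (of_den_pos ξ _).ne', Nat.cast_pred hn] at key
  linarith [log_two_lt_d9]

end UltraStrongLiouville

theorem stmt_6_general (ξ : ℝ) (h : UltraStrongLiouville ξ) :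
    ∃ N : ℕ, ∀ m : ℕ, N ≤ m →
      Real.exp (Nat.factorial (m - 3)) < (GenContFract.of ξ).dens m := by
  have hstep : ∀ n : ℕ, 5 ≤ n → ((n : ℝ) - 1) * log ((GenContFract.of ξ).dens n) <
      log ((GenContFract.of ξ).dens (n + 1)) + 1 :=
    fun n hn => h.sub_one_mul_log_dens_lt (by omega)
  refine ⟨8, fun m hm => ?_⟩
  rw [← lt_log_iff_exp_lt (GenContFract.of_den_pos ξ m)]
  exact factorial_sub_three_lt (GenContFract.two_le_log_of_den (h.not_terminatedAt 4) le_rfl)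
    hstep hm

/-- If `ξ` is an ultra-strong Liouville number (in particular a Liouville number), then the
denominators `q_m` of its continued fraction convergents satisfy `q_m > e^{(m-3)!}` for all
sufficiently large `m`. -/
theorem stmt_6 (ξ : ℝ) (hL : Liouville ξ) (h : UltraStrongLiouville ξ) :
    ∃ N : ℕ, ∀ m : ℕ, N ≤ m →
      Real.exp (Nat.factorial (m - 3)) < (GenContFract.of ξ).dens m :=
  stmt_6_general ξ h
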